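/- Let n ≥ 2, z : Fin n → ℝ, y : Fin n with z y = max_i z i, and β ≥ 0. Define γ_y = ((∑_{i ≠ y} exp (β (z i))) · (∑_i exp (z i))) / ((∑_i exp (β (z i))) · (∑_{i ≠ y} exp (z i))). Then γ_y ≤ ((n - 1) · exp(β M') / (exp(β (z y)) + (n - 1) · exp(β M'))) · ((exp (z y) + (n - 1) · exp M') / ((n - 1) · exp m)), where m = min_i z i and M' = max_{i ≠ y} z i. -/
import Mathlib


open Real Finset

/-- Intermediate upper bound on the true-class gradient rescaling factor `γ_y`:
`γ_y ≤ ((n-1)·exp(β M') / (exp(β z y) + (n-1)·exp(β M'))) · ((exp(z y) + (n-1)·exp M') / ((n-1)·exp m))`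
where `m = min_i z i` and `M' = max_{i ≠ y} z i`. -/
theorem gamma_true_class_upper_bound_intermediate (n : ℕ) (hn : 2 ≤ n) (z : Fin n → ℝ)
    (y : Fin n) (hy : z y = Finset.univ.sup' (Finset.univ_nonempty_iff.mpr ⟨y⟩) z)
    (β : ℝ) (hβ : 0 ≤ β) (γ m M' : ℝ)
    (hγ : γ = ((∑ i ∈ Finset.univ.erase y, Real.exp (β * z i)) * ∑ i, Real.exp (z i)) /
      ((∑ i, Real.exp (β * z i)) * ∑ i ∈ Finset.univ.erase y, Real.exp (z i)))
    (hm : m = Finset.univ.inf' (Finset.univ_nonempty_iff.mpr ⟨y⟩) z)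
    (hM' : M' = (Finset.univ.erase y).sup'
      (by rw [← Finset.card_pos, Finset.card_erase_of_mem (Finset.mem_univ y),
        Finset.card_univ, Fintype.card_fin]; omega) z) :
    γ ≤ (((n : ℝ) - 1) * Real.exp (β * M') /
          (Real.exp (β * z y) + ((n : ℝ) - 1) * Real.exp (β * M'))) *
        ((Real.exp (z y) + ((n : ℝ) - 1) * Real.exp M') / (((n : ℝ) - 1) * Real.exp m)) := by
  have hne : (Finset.univ.erase y).Nonempty := by
    rw [← Finset.card_pos, Finset.card_erase_of_mem (Finset.mem_univ y),
      Finset.card_univ, Fintype.card_fin]; omega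
  have hcard : ((Finset.univ.erase y).card : ℝ) = (n : ℝ) - 1 := by
    rw [Finset.card_erase_of_mem (Finset.mem_univ y), Finset.card_univ, Fintype.card_fin,
      Nat.cast_sub (by omega : 1 ≤ n), Nat.cast_one]
  have hn1 : (0:ℝ) < (n:ℝ) - 1 := by
    have : (2:ℝ) ≤ (n:ℝ) := by exact_mod_cast hn
    linarith
  set S' := ∑ i ∈ Finset.univ.erase y, Real.exp (β * z i) with hS'def
  set T' := ∑ i ∈ Finset.univ.erase y, Real.exp (z i) with hT'def
  set T := ∑ i, Real.exp (z i) with hTdef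
  have hSsplit : ∑ i, Real.exp (β * z i) = Real.exp (β * z y) + S' :=
    (Finset.add_sum_erase _ _ (Finset.mem_univ y)).symm
  have hzM' : ∀ i ∈ Finset.univ.erase y, z i ≤ M' := by
    intro i hi; rw [hM']; exact Finset.le_sup' z hi
  have hmz : ∀ i, m ≤ z i := by
    intro i; rw [hm]; exact Finset.inf'_le z (Finset.mem_univ i)
  -- bounds
  have hS'le : S' ≤ ((n:ℝ) - 1) * Real.exp (β * M') := by
    calc S' ≤ (Finset.univ.erase y).card • Real.exp (β * M') := by
          apply Finset.sum_le_card_nsmul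
          intro i hi
          exact Real.exp_le_exp.mpr (mul_le_mul_of_nonneg_left (hzM' i hi) hβ)
      _ = ((n:ℝ) - 1) * Real.exp (β * M') := by rw [nsmul_eq_mul, hcard]
  have hT'le : T' ≤ ((n:ℝ) - 1) * Real.exp M' := by
    calc T' ≤ (Finset.univ.erase y).card • Real.exp M' := by
          apply Finset.sum_le_card_nsmul
          intro i hi
          exact Real.exp_le_exp.mpr (hzM' i hi)
      _ = ((n:ℝ) - 1) * Real.exp M' := by rw [nsmul_eq_mul, hcard]
  have hT'ge : ((n:ℝ) - 1) * Real.exp m ≤ T' := by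
    calc ((n:ℝ) - 1) * Real.exp m = (Finset.univ.erase y).card • Real.exp m := by
          rw [nsmul_eq_mul, hcard]
      _ ≤ T' := by
          apply Finset.card_nsmul_le_sum
          intro i _
          exact Real.exp_le_exp.mpr (hmz i)
  have hTle : T ≤ Real.exp (z y) + ((n:ℝ) - 1) * Real.exp M' := by
    have : T = Real.exp (z y) + T' := (Finset.add_sum_erase _ _ (Finset.mem_univ y)).symm
    linarith
  -- positivity
  have hS'pos : 0 < S' := Finset.sum_pos (fun i _ => Real.exp_pos _) hne
  have hT'pos : 0 < T' := Finset.sum_pos (fun i _ => Real.exp_pos _) hne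
  have hTpos : 0 < T := Finset.sum_pos (fun i _ => Real.exp_pos _) (Finset.univ_nonempty_iff.mpr ⟨y⟩)
  have hc : 0 < Real.exp (β * z y) := Real.exp_pos _
  have hA : 0 < ((n:ℝ) - 1) * Real.exp (β * M') := by positivity
  have hD : 0 < ((n:ℝ) - 1) * Real.exp m := by positivity
  have hB : 0 < Real.exp (z y) + ((n:ℝ) - 1) * Real.exp M' := by positivity
  rw [hγ, hSsplit]
  have heq : S' * T / ((Real.exp (β * z y) + S') * T')
      = (S' / (Real.exp (β * z y) + S')) * (T / T') := by
    rw [div_mul_div_comm]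
  rw [heq]
  have h1 : S' / (Real.exp (β * z y) + S')
      ≤ ((n:ℝ) - 1) * Real.exp (β * M')
        / (Real.exp (β * z y) + ((n:ℝ) - 1) * Real.exp (β * M')) := by
    rw [div_le_div_iff₀ (by linarith) (by linarith)]
    nlinarith [hS'le, hc]
  have h2 : T / T' ≤ (Real.exp (z y) + ((n:ℝ) - 1) * Real.exp M') / (((n:ℝ) - 1) * Real.exp m) :=
    div_le_div₀ hB.le hTle hD hT'ge
  exact mul_le_mul h1 h2 (by positivity) (by positivity)
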